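/- Let m ≥ 3 be odd and let G be the Artin group of type I₂(m), presented as ⟨a, b | w = w'⟩ where w is the alternating word abab⋯ of length m starting with a and w' is the alternating word baba⋯ of length m starting with b. Then the abelianization of G is infinite cyclic (a and b map to the same generator), and the zeroth-order degree of G is δ₀ = dim_ℚ( G'/G'' ⊗_ℤ ℚ ) = m − 1. -/

import Mathlib

/-!
Write `m = 2k + 1`, `t = a` and `v = b a⁻¹`, so that `b = v t`. Rewriting the two alternating
words in terms of the conjugates `uⱼ = tʲ v t⁻ʲ` turns the relation into
`u₁ u₃ ⋯ u₂ₖ₋₁ = u₀ u₂ ⋯ u₂ₖ`, which expresses `u₂ₖ = t u₂ₖ₋₁ t⁻¹` through `u₀, …, u₂ₖ₋₁`.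
Hence `G ≅ F₂ₖ ⋊_φ ℤ`, where `φ` shifts the free basis `gⱼ ↦ gⱼ₊₁` and sends
`g₂ₖ₋₁ ↦ (g₀ g₂ ⋯ g₂ₖ₋₂)⁻¹ (g₁ g₃ ⋯ g₂ₖ₋₁)` (the monodromy of the `(2, m)` torus knot).
Since `m` is odd, `a` and `b` become equal in `G^{ab}`, so the exponent sum `G → ℤ` is the
abelianization; its kernel `G'` is the fiber `F₂ₖ`, free of rank `m - 1`.
-/

open scoped TensorProduct

/-- The alternating word `xyxy⋯` of length `m`. -/
def altWord {α : Type*} [Monoid α] (x y : α) (m : ℕ) : α :=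
  ((List.range m).map (fun i => if i % 2 = 0 then x else y)).prod

/-- The single relator `w w'⁻¹` of the Artin group of type `I₂(m)`, where `a = of 0`,
`b = of 1`. -/
def dihedralArtinRels (m : ℕ) : Set (FreeGroup (Fin 2)) :=
  {altWord (FreeGroup.of 0) (FreeGroup.of 1) m *
    (altWord (FreeGroup.of 1) (FreeGroup.of 0) m)⁻¹}

theorem altWord_succ {M : Type*} [Monoid M] (x y : M) (n : ℕ) :
    altWord x y (n + 1) = altWord x y n * if n % 2 = 0 then x else y := by
  simp [altWord, List.range_succ]

theorem map_altWord {M N : Type*} [Monoid M] [Monoid N] (f : M →* N) (x y : M) (n : ℕ) :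
    f (altWord x y n) = altWord (f x) (f y) n := by
  simp only [altWord, map_list_prod, List.map_map]
  congr 1
  exact List.map_congr_left fun _ _ => by simp only [Function.comp_apply]; split <;> rfl

theorem altWord_two_mul_add_one {M : Type*} [Monoid M] (x y : M) (n : ℕ) :
    altWord x y (2 * n + 1) = (x * y) ^ n * x := by
  induction n with
  | zero => simp [altWord]
  | succ n ih =>
    rw [show 2 * (n + 1) + 1 = 2 * n + 1 + 1 + 1 by ring, altWord_succ, altWord_succ, ih]
    simp only [Nat.add_mod_right, Nat.mul_mod_right, show (2 * n + 1) % 2 = 1 by omega]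
    simp [pow_succ, mul_assoc]

theorem mul_pow_eq_prod_conj {G : Type*} [Group G] (x s : G) (n : ℕ) :
    (x * s) ^ n = ((List.range n).map fun i => s ^ i * x * (s ^ i)⁻¹).prod * s ^ n := by
  induction n with
  | zero => simp
  | succ n ih => rw [pow_succ, ih, List.prod_range_succ, pow_succ]; group

theorem altWord_mul_right_eq_iff {G : Type*} [Group G] (t v : G) (k : ℕ) :
    altWord t (v * t) (2 * k + 1) = altWord (v * t) t (2 * k + 1) ↔
      ((List.range k).map fun i => t ^ (2 * i + 1) * v * (t ^ (2 * i + 1))⁻¹).prod =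
        ((List.range (k + 1)).map fun i => t ^ (2 * i) * v * (t ^ (2 * i))⁻¹).prod := by
  have hodd : altWord t (v * t) (2 * k + 1) =
      ((List.range k).map fun i => t ^ (2 * i + 1) * v * (t ^ (2 * i + 1))⁻¹).prod *
        t ^ (2 * k + 1) := by
    rw [altWord_two_mul_add_one, show t * (v * t) = t * v * t⁻¹ * t ^ 2 by group,
      mul_pow_eq_prod_conj, mul_assoc, ← pow_mul, ← pow_succ]
    congr 3 with i
    group
  have heven : altWord (v * t) t (2 * k + 1) =
      ((List.range (k + 1)).map fun i => t ^ (2 * i) * v * (t ^ (2 * i))⁻¹).prod *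
        t ^ (2 * k + 1) := by
    rw [altWord_two_mul_add_one, mul_assoc, ← sq, mul_pow_eq_prod_conj, List.prod_range_succ]
    simp only [← pow_mul]
    group
  rw [hodd, heven, mul_left_inj]

theorem map_prod_range {M N : Type*} [Monoid M] [Monoid N] (f : M →* N) {g : ℕ → M}
    {h : ℕ → N} {n : ℕ} (hgh : ∀ i < n, f (g i) = h i) :
    f ((List.range n).map g).prod = ((List.range n).map h).prod := by
  rw [map_list_prod, List.map_map]
  exact congrArg _ (List.map_congr_left fun i hi => hgh i (List.mem_range.mp hi))

theorem MulAut.map_zpow_apply_of_map_apply {N H : Type*} [Group N] [Group H] (f : N →* H)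
    {σ : MulAut N} {τ : MulAut H} (h : ∀ x, f (σ x) = τ (f x)) (z : ℤ) (x : N) :
    f ((σ ^ z) x) = (τ ^ z) (f x) := by
  induction z using Int.induction_on generalizing x with
  | zero => rfl
  | succ n ih => rw [zpow_add_one, zpow_add_one, MulAut.mul_apply, MulAut.mul_apply, ih, h]
  | pred n ih =>
    have hinv : f (σ⁻¹ x) = τ⁻¹ (f x) := by
      conv_rhs => rw [← MulAut.apply_inv_self _ σ x, h, MulAut.inv_apply_self]
    rw [zpow_sub_one, zpow_sub_one, MulAut.mul_apply, MulAut.mul_apply, ih, hinv]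

theorem finrank_rat_tensor_abelianization_of_mulEquiv_freeGroup {G ι : Type*} [Group G]
    [Fintype ι] (e : G ≃* FreeGroup ι) :
    Module.finrank ℚ (ℚ ⊗[ℤ] Additive (Abelianization G)) = Fintype.card ι := by
  let e' : Additive (Abelianization G) ≃ₗ[ℤ] FreeAbelianGroup ι :=
    (MulEquiv.toAdditive e.abelianizationCongr).toIntLinearEquiv
  rw [(TensorProduct.AlgebraTensorModule.congr (LinearEquiv.refl ℚ ℚ) e').finrank_eq,
    Module.finrank_baseChange, Module.finrank_eq_card_basis (FreeAbelianGroup.basis ι)]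

abbrev DihedralArtinGroup (m : ℕ) : Type := PresentedGroup (dihedralArtinRels m)

namespace DihedralArtinGroup

open PresentedGroup SemidirectProduct Multiplicative

section Presentation

variable {m : ℕ} {H : Type*} [Group H]

def lift (x y : H) (h : altWord x y m = altWord y x m) : DihedralArtinGroup m →* H :=
  toGroup (f := ![x, y]) <| by
    rintro r rfl
    simp [map_altWord, h]

theorem lift_of_zero (x y : H) (h : altWord x y m = altWord y x m) : lift x y h (of 0) = x :=
  toGroup.of _

theorem lift_of_one (x y : H) (h : altWord x y m = altWord y x m) : lift x y h (of 1) = y :=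
  toGroup.of _

theorem hom_ext {f g : DihedralArtinGroup m →* H} (h₀ : f (of 0) = g (of 0))
    (h₁ : f (of 1) = g (of 1)) : f = g :=
  PresentedGroup.ext fun i => by fin_cases i <;> assumption

theorem altWord_of : altWord (of 0 : DihedralArtinGroup m) (of 1) m = altWord (of 1) (of 0) m := by
  have h := one_of_mem (rels := dihedralArtinRels m) rfl
  rwa [map_mul, map_inv, map_altWord, map_altWord, mul_inv_eq_one] at h

def exponentSum : DihedralArtinGroup m →* Multiplicative ℤ := lift (ofAdd 1) (ofAdd 1) rfl

theorem abelianization_of_of_zero_eq_of_one (hm : Odd m) :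
    Abelianization.of (of 0 : DihedralArtinGroup m) = Abelianization.of (of 1) := by
  obtain ⟨k, rfl⟩ := hm
  have h := congrArg Abelianization.of (altWord_of (m := 2 * k + 1))
  rwa [map_altWord, map_altWord, altWord_two_mul_add_one, altWord_two_mul_add_one,
    mul_comm (Abelianization.of (of 1)), mul_left_cancel_iff] at h

def abelianizationEquiv (hm : Odd m) : Abelianization (DihedralArtinGroup m) ≃* Multiplicative ℤ :=
  MonoidHom.toMulEquiv (Abelianization.lift exponentSum) (zpowersHom _ (Abelianization.of (of 0)))
    (Abelianization.hom_ext _ _ <| hom_ext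
      (by simp [exponentSum, lift_of_zero])
      (by simp [exponentSum, lift_of_one, abelianization_of_of_zero_eq_of_one hm]))
    (MonoidHom.ext_mint <| by simp [exponentSum, lift_of_zero])

theorem abelianizationEquiv_of (hm : Odd m) (x : DihedralArtinGroup m) :
    abelianizationEquiv hm (Abelianization.of x) = exponentSum x :=
  Abelianization.lift_apply_of exponentSum x

theorem commutator_eq_ker_exponentSum (hm : Odd m) :
    commutator (DihedralArtinGroup m) = exponentSum.ker := by
  rw [← Abelianization.ker_of, ← MonoidHom.ker_mulEquiv_comp _ (abelianizationEquiv hm)]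
  rfl

end Presentation

section Monodromy

variable (k : ℕ)

def gen (j : ℕ) : FreeGroup (Fin (2 * k)) :=
  if h : j < 2 * k then FreeGroup.of ⟨j, h⟩ else 1

def evenProd : FreeGroup (Fin (2 * k)) := ((List.range k).map fun i => gen k (2 * i)).prod

def oddProd : FreeGroup (Fin (2 * k)) := ((List.range k).map fun i => gen k (2 * i + 1)).prod

def shift : FreeGroup (Fin (2 * k)) →* FreeGroup (Fin (2 * k)) :=
  FreeGroup.lift fun i => if (i : ℕ) + 1 < 2 * k then gen k (i + 1) else (evenProd k)⁻¹ * oddProd k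

def unshift : FreeGroup (Fin (2 * k)) →* FreeGroup (Fin (2 * k)) :=
  FreeGroup.lift fun i => if (i : ℕ) = 0 then evenProd k * (oddProd k)⁻¹ else gen k (i - 1)

variable {k}

theorem of_eq_gen (i : Fin (2 * k)) : FreeGroup.of i = gen k i := by
  simp [gen]

theorem shift_gen {j : ℕ} (h : j + 1 < 2 * k) : shift k (gen k j) = gen k (j + 1) := by
  simp [gen, shift, h, show j < 2 * k by omega]

theorem shift_gen_last (hk : 0 < k) : shift k (gen k (2 * k - 1)) = (evenProd k)⁻¹ * oddProd k := by
  simp [gen, shift, show 2 * k - 1 < 2 * k by omega, show 2 * k - 1 + 1 = 2 * k by omega]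

theorem unshift_gen_zero (hk : 0 < k) : unshift k (gen k 0) = evenProd k * (oddProd k)⁻¹ := by
  simp [gen, unshift, hk]

theorem unshift_gen_succ {j : ℕ} (h : j + 1 < 2 * k) : unshift k (gen k (j + 1)) = gen k j := by
  simp [gen, unshift, h]

theorem evenProd_eq_gen_zero_mul (hk : 0 < k) :
    evenProd k = gen k 0 * ((List.range (k - 1)).map fun i => gen k (2 * i + 2)).prod := by
  obtain ⟨l, rfl⟩ := Nat.exists_eq_add_of_lt hk
  simp [evenProd, List.prod_range_succ', mul_add]

theorem evenProd_eq_mul_gen (hk : 0 < k) :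
    evenProd k = ((List.range (k - 1)).map fun i => gen k (2 * i)).prod * gen k (2 * k - 2) := by
  obtain ⟨l, rfl⟩ := Nat.exists_eq_add_of_lt hk
  simp [evenProd, List.prod_range_succ, mul_add]

theorem oddProd_eq_mul_gen (hk : 0 < k) :
    oddProd k = ((List.range (k - 1)).map fun i => gen k (2 * i + 1)).prod * gen k (2 * k - 1) := by
  obtain ⟨l, rfl⟩ := Nat.exists_eq_add_of_lt hk
  simp [oddProd, List.prod_range_succ, mul_add]

theorem shift_evenProd : shift k (evenProd k) = oddProd k :=
  map_prod_range _ fun _ _ => shift_gen (by omega)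

theorem shift_oddProd (hk : 0 < k) : shift k (oddProd k) = (gen k 0)⁻¹ * oddProd k := by
  have hmid : ((List.range (k - 1)).map fun i => gen k (2 * i + 2)).prod =
      (gen k 0)⁻¹ * evenProd k := by
    rw [evenProd_eq_gen_zero_mul hk, inv_mul_cancel_left]
  conv_lhs => rw [oddProd_eq_mul_gen hk]
  rw [map_mul, shift_gen_last hk, map_prod_range _ fun _ _ => shift_gen (by omega), hmid]
  group

theorem unshift_evenProd (hk : 0 < k) :
    unshift k (evenProd k) = evenProd k * (gen k (2 * k - 1))⁻¹ := by
  have hmid : ((List.range (k - 1)).map fun i => gen k (2 * i + 1)).prod =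
      oddProd k * (gen k (2 * k - 1))⁻¹ := by
    rw [oddProd_eq_mul_gen hk, mul_inv_cancel_right]
  conv_lhs => rw [evenProd_eq_gen_zero_mul hk]
  rw [map_mul, unshift_gen_zero hk,
    map_prod_range _ fun _ _ => unshift_gen_succ (by omega), hmid]
  group

theorem unshift_oddProd (hk : 0 < k) : unshift k (oddProd k) = evenProd k := by
  rw [oddProd_eq_mul_gen hk, map_mul, map_prod_range _ fun _ _ => unshift_gen_succ (by omega),
    show 2 * k - 1 = 2 * k - 2 + 1 by omega, unshift_gen_succ (by omega), ← evenProd_eq_mul_gen hk]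

theorem unshift_comp_shift : (unshift k).comp (shift k) = MonoidHom.id _ := by
  apply FreeGroup.ext_hom
  intro i
  have hk : 0 < k := by have := i.isLt; omega
  rw [MonoidHom.comp_apply, MonoidHom.id_apply, of_eq_gen]
  by_cases h : (i : ℕ) + 1 < 2 * k
  · rw [shift_gen h, unshift_gen_succ h]
  · rw [show (i : ℕ) = 2 * k - 1 by omega, shift_gen_last hk, map_mul, map_inv, unshift_evenProd hk,
      unshift_oddProd hk]
    group

theorem shift_comp_unshift : (shift k).comp (unshift k) = MonoidHom.id _ := by
  apply FreeGroup.ext_hom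
  intro i
  have hk : 0 < k := by have := i.isLt; omega
  rw [MonoidHom.comp_apply, MonoidHom.id_apply, of_eq_gen]
  by_cases h : (i : ℕ) = 0
  · rw [h, unshift_gen_zero hk, map_mul, map_inv, shift_evenProd, shift_oddProd hk]
    group
  · obtain ⟨j, hj⟩ : ∃ j, (i : ℕ) = j + 1 := ⟨i - 1, by omega⟩
    rw [hj, unshift_gen_succ (by omega), shift_gen (by omega)]

variable (k) in
def monodromy : MulAut (FreeGroup (Fin (2 * k))) :=
  MonoidHom.toMulEquiv (shift k) (unshift k) unshift_comp_shift shift_comp_unshift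

theorem monodromy_pow_gen_zero {j : ℕ} (h : j < 2 * k) : (monodromy k ^ j) (gen k 0) = gen k j := by
  induction j with
  | zero => rfl
  | succ j ih => rw [pow_succ', MulAut.mul_apply, ih (by omega)]; exact shift_gen h

theorem monodromy_pow_two_mul_gen_zero (hk : 0 < k) :
    (monodromy k ^ (2 * k)) (gen k 0) = (evenProd k)⁻¹ * oddProd k := by
  have hsplit : monodromy k ^ (2 * k) = monodromy k * monodromy k ^ (2 * k - 1) := by
    rw [← pow_succ']
    congr 1
    omega
  rw [hsplit, MulAut.mul_apply, monodromy_pow_gen_zero (by omega)]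
  exact shift_gen_last hk

variable (k) in
abbrev MappingTorus : Type :=
  FreeGroup (Fin (2 * k)) ⋊[zpowersHom _ (monodromy k)] Multiplicative ℤ

variable (k) in
def stableLetter : MappingTorus k := inr (ofAdd 1)

theorem stableLetter_pow_mul_inl_mul (j : ℕ) (x : FreeGroup (Fin (2 * k))) :
    stableLetter k ^ j * inl x * (stableLetter k ^ j)⁻¹ = inl ((monodromy k ^ j) x) := by
  rw [stableLetter, ← map_pow, ← map_inv, ← inl_aut, map_pow, zpowersHom_apply, toAdd_ofAdd,
    zpow_one]

theorem altWord_stableLetter (hk : 0 < k) :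
    altWord (stableLetter k) (inl (gen k 0) * stableLetter k) (2 * k + 1) =
      altWord (inl (gen k 0) * stableLetter k) (stableLetter k) (2 * k + 1) := by
  rw [altWord_mul_right_eq_iff, List.prod_range_succ]
  simp only [stableLetter_pow_mul_inl_mul]
  have hodd := map_prod_range (inl : _ →* MappingTorus k) (g := fun i => gen k (2 * i + 1))
    (n := k) fun _ _ => congrArg inl (monodromy_pow_gen_zero (by omega)).symm
  have heven := map_prod_range (inl : _ →* MappingTorus k) (g := fun i => gen k (2 * i))
    (n := k) fun _ _ => congrArg inl (monodromy_pow_gen_zero (by omega)).symm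
  rw [← hodd, ← heven, monodromy_pow_two_mul_gen_zero hk, ← map_mul, ← evenProd, ← oddProd,
    mul_inv_cancel_left]

section MappingTorusLift

variable {H : Type*} [Group H]

variable (k) in
def fiberHom (t v : H) : FreeGroup (Fin (2 * k)) →* H :=
  FreeGroup.lift fun i => t ^ (i : ℕ) * v * (t ^ (i : ℕ))⁻¹

theorem fiberHom_gen (t v : H) {j : ℕ} (h : j < 2 * k) :
    fiberHom k t v (gen k j) = t ^ j * v * (t ^ j)⁻¹ := by
  simp [gen, fiberHom, h]

variable {t v : H}

theorem fiberHom_shift (hrel : altWord t (v * t) (2 * k + 1) = altWord (v * t) t (2 * k + 1))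
    (x : FreeGroup (Fin (2 * k))) : fiberHom k t v (shift k x) = t * fiberHom k t v x * t⁻¹ := by
  suffices (fiberHom k t v).comp (shift k) = (MulAut.conj t).toMonoidHom.comp (fiberHom k t v) from
    DFunLike.congr_fun this x
  apply FreeGroup.ext_hom
  intro i
  have hk : 0 < k := by have := i.isLt; omega
  simp only [MonoidHom.comp_apply, MulEquiv.coe_toMonoidHom, MulAut.conj_apply, of_eq_gen]
  by_cases h : (i : ℕ) + 1 < 2 * k
  · rw [shift_gen h, fiberHom_gen _ _ h, fiberHom_gen _ _ (by omega)]
    group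
  · have hodd : fiberHom k t v (oddProd k) =
        ((List.range k).map fun i => t ^ (2 * i + 1) * v * (t ^ (2 * i + 1))⁻¹).prod :=
      map_prod_range _ fun _ _ => fiberHom_gen _ _ (by omega)
    have heven : fiberHom k t v (evenProd k) =
        ((List.range k).map fun i => t ^ (2 * i) * v * (t ^ (2 * i))⁻¹).prod :=
      map_prod_range _ fun _ _ => fiberHom_gen _ _ (by omega)
    obtain ⟨n, hn⟩ : ∃ n, 2 * k = n + 1 := ⟨2 * k - 1, by omega⟩
    rw [show (i : ℕ) = n by omega, show n = 2 * k - 1 by omega, shift_gen_last hk, map_mul, map_inv,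
      hodd, heven, (altWord_mul_right_eq_iff t v k).mp hrel, List.prod_range_succ,
      inv_mul_cancel_left, fiberHom_gen _ _ (by omega), hn, Nat.add_sub_cancel]
    group

variable (k) in
def MappingTorus.lift (hrel : altWord t (v * t) (2 * k + 1) = altWord (v * t) t (2 * k + 1)) :
    MappingTorus k →* H :=
  SemidirectProduct.lift (fiberHom k t v) (zpowersHom H t) fun g => by
    refine MonoidHom.ext fun x => ?_
    simp only [MonoidHom.comp_apply, MulEquiv.coe_toMonoidHom, zpowersHom_apply, map_zpow]
    exact MulAut.map_zpow_apply_of_map_apply _ (fiberHom_shift hrel) _ x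

variable (hrel : altWord t (v * t) (2 * k + 1) = altWord (v * t) t (2 * k + 1))

theorem MappingTorus.lift_inl (x : FreeGroup (Fin (2 * k))) :
    MappingTorus.lift k hrel (inl x) = fiberHom k t v x :=
  SemidirectProduct.lift_inl _ _ _ x

theorem MappingTorus.lift_stableLetter : MappingTorus.lift k hrel (stableLetter k) = t := by
  simp [MappingTorus.lift, stableLetter]

end MappingTorusLift

def toMappingTorus (hk : 0 < k) : DihedralArtinGroup (2 * k + 1) →* MappingTorus k :=
  lift (stableLetter k) (inl (gen k 0) * stableLetter k) (altWord_stableLetter hk)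

theorem toMappingTorus_of_zero (hk : 0 < k) : toMappingTorus hk (of 0) = stableLetter k :=
  lift_of_zero _ _ _

theorem toMappingTorus_of_one (hk : 0 < k) :
    toMappingTorus hk (of 1) = inl (gen k 0) * stableLetter k :=
  lift_of_one _ _ _

def ofMappingTorus : MappingTorus k →* DihedralArtinGroup (2 * k + 1) :=
  MappingTorus.lift k (t := of 0) (v := of 1 * (of 0)⁻¹) <| by
    rw [inv_mul_cancel_right]
    exact altWord_of

theorem ofMappingTorus_comp_toMappingTorus (hk : 0 < k) :
    ofMappingTorus.comp (toMappingTorus hk) = MonoidHom.id _ := by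
  apply hom_ext
  · simp [toMappingTorus, ofMappingTorus, lift_of_zero, MappingTorus.lift_stableLetter]
  · simp [toMappingTorus, ofMappingTorus, lift_of_one, MappingTorus.lift_stableLetter,
      MappingTorus.lift_inl, fiberHom_gen _ _ (show 0 < 2 * k by omega)]

theorem toMappingTorus_comp_ofMappingTorus (hk : 0 < k) :
    (toMappingTorus hk).comp ofMappingTorus = MonoidHom.id _ := by
  apply SemidirectProduct.hom_ext
  · apply FreeGroup.ext_hom
    intro i
    simp only [MonoidHom.comp_apply, MonoidHom.id_apply, ofMappingTorus, MappingTorus.lift_inl,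
      of_eq_gen, fiberHom_gen _ _ i.isLt]
    rw [map_mul, map_mul, map_mul, map_inv, map_inv, map_pow, toMappingTorus_of_zero,
      toMappingTorus_of_one, mul_inv_cancel_right, stableLetter_pow_mul_inl_mul,
      monodromy_pow_gen_zero i.isLt]
  · apply MonoidHom.ext_mint
    change toMappingTorus hk (ofMappingTorus (stableLetter k)) = stableLetter k
    rw [ofMappingTorus, MappingTorus.lift_stableLetter, toMappingTorus_of_zero]

def mulEquivMappingTorus (hk : 0 < k) : DihedralArtinGroup (2 * k + 1) ≃* MappingTorus k :=
  MonoidHom.toMulEquiv (toMappingTorus hk) ofMappingTorus (ofMappingTorus_comp_toMappingTorus hk)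
    (toMappingTorus_comp_ofMappingTorus hk)

theorem rightHom_comp_mulEquivMappingTorus (hk : 0 < k) :
    rightHom.comp (mulEquivMappingTorus hk : DihedralArtinGroup (2 * k + 1) →* MappingTorus k) =
      exponentSum := by
  apply hom_ext
  · simp [mulEquivMappingTorus, toMappingTorus_of_zero, stableLetter, exponentSum, lift_of_zero]
  · simp [mulEquivMappingTorus, toMappingTorus_of_one, stableLetter, exponentSum, lift_of_one]

noncomputable def commutatorEquiv (hk : 0 < k) :
    commutator (DihedralArtinGroup (2 * k + 1)) ≃* FreeGroup (Fin (2 * k)) :=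
  have h : commutator (DihedralArtinGroup (2 * k + 1)) =
      (inl : _ →* MappingTorus k).range.map (mulEquivMappingTorus hk).symm := by
    rw [commutator_eq_ker_exponentSum (odd_two_mul_add_one k),
      ← rightHom_comp_mulEquivMappingTorus hk, MonoidHom.ker_comp_mulEquiv,
      range_inl_eq_ker_rightHom]
  (MulEquiv.subgroupCongr h).trans <|
    ((mulEquivMappingTorus hk).symm.subgroupMap _).symm.trans
      (MonoidHom.ofInjective inl_injective).symm

end Monodromy

end DihedralArtinGroup

/-- For odd `m`, the Artin group of type `I₂(m)` has abelianization `ℤ` (both generators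
mapping to the same generator) and zeroth-order degree `δ₀ = m - 1`. -/
theorem dihedral_artin_delta_zero (m : ℕ) (hm : 3 ≤ m) (hodd : Odd m) :
    (∃ e : Abelianization (PresentedGroup (dihedralArtinRels m)) ≃* Multiplicative ℤ,
      e (Abelianization.of (PresentedGroup.of 0)) = Multiplicative.ofAdd 1 ∧
      e (Abelianization.of (PresentedGroup.of 1)) = Multiplicative.ofAdd 1) ∧
    Module.finrank ℚ (ℚ ⊗[ℤ] Additive (Abelianization
      ↥(commutator (PresentedGroup (dihedralArtinRels m))))) = m - 1 := by
  refine ⟨⟨DihedralArtinGroup.abelianizationEquiv hodd, ?_, ?_⟩, ?_⟩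
  · rw [DihedralArtinGroup.abelianizationEquiv_of, DihedralArtinGroup.exponentSum,
      DihedralArtinGroup.lift_of_zero]
  · rw [DihedralArtinGroup.abelianizationEquiv_of, DihedralArtinGroup.exponentSum,
      DihedralArtinGroup.lift_of_one]
  · obtain ⟨k, rfl⟩ := hodd
    rw [finrank_rat_tensor_abelianization_of_mulEquiv_freeGroup
      (DihedralArtinGroup.commutatorEquiv (by omega)),
      Fintype.card_fin]
    omega
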